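/- Every 1-n MSC is an n-1 (mailbox) MSC. -/

import Mathlib

namespace MSCPaper

/-- A communication action: either `send p q m` (process `p` sends message `m`
to process `q`) or `recv p q m` (process `q` receives message `m` from `p`). -/
inductive Action (P Msg : Type) : Type where
  | send (p q : P) (m : Msg) : Action P Msg
  | recv (p q : P) (m : Msg) : Action P Msg

namespace Action

variable {P Msg : Type}

/-- The process executing an action: the sender of a send, the receiver of a receive. -/
def exec : Action P Msg → P
  | send p _ _ => p
  | recv _ q _ => q

def isSend (a : Action P Msg) : Prop := ∃ p q m, a = send p q m

def isRecv (a : Action P Msg) : Prop := ∃ p q m, a = recv p q m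

/-- `a` is a send action whose destination is `q`. -/
def sendTo (a : Action P Msg) (q : P) : Prop := ∃ p m, a = send p q m

/-- `a` is a send action from `p` to `q`. -/
def isSendFromTo (a : Action P Msg) (p q : P) : Prop := ∃ m, a = send p q m

/-- `a` is a receive action of a message from `p` to `q`. -/
def isRecvFromTo (a : Action P Msg) (p q : P) : Prop := ∃ m, a = recv p q m

end Action

/-- The data of a message sequence chart: a set of events `E`, the process
successor relation `next` (→), the message relation `msg` (◁), and the
labelling `lbl` (λ). -/
structure PreMSC (P Msg : Type) where
  E : Type
  next : E → E → Prop
  msg : E → E → Prop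
  lbl : E → Action P Msg

namespace PreMSC

variable {P Msg : Type}

/-- One step of the happens-before relation: `→ ∪ ◁`. -/
def step (M : PreMSC P Msg) (a b : M.E) : Prop := M.next a b ∨ M.msg a b

/-- The happens-before relation `≤ := (→ ∪ ◁)*`. -/
def hb (M : PreMSC P Msg) : M.E → M.E → Prop := Relation.ReflTransGen M.step

/-- The strict happens-before relation `< := (→ ∪ ◁)⁺`. -/
def shb (M : PreMSC P Msg) : M.E → M.E → Prop := Relation.TransGen M.step

/-- An event is matched if it has a `◁`-successor. -/
def Matched (M : PreMSC P Msg) (e : M.E) : Prop := ∃ f, M.msg e f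

/-- The axioms making a `PreMSC` an MSC. -/
structure IsMSC (M : PreMSC P Msg) : Prop where
  /-- The set of events is finite. -/
  finite : Finite M.E
  /-- `next` only relates events executed by the same process. -/
  next_exec : ∀ e f, M.next e f → (M.lbl e).exec = (M.lbl f).exec
  /-- Events executed by the same process are totally ordered by `next⁺`. -/
  proc_total : ∀ e f, (M.lbl e).exec = (M.lbl f).exec → e ≠ f →
    Relation.TransGen M.next e f ∨ Relation.TransGen M.next f e
  /-- `next` is the immediate successor relation of the total order `next⁺`
  on each process line. -/
  next_cover : ∀ e f, M.next e f →
    ¬ ∃ g, Relation.TransGen M.next e g ∧ Relation.TransGen M.next g f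
  /-- `◁` relates matching send/receive events. -/
  msg_lbl : ∀ e f, M.msg e f → ∃ p q m, M.lbl e = .send p q m ∧ M.lbl f = .recv p q m
  /-- Every receive event has exactly one `◁`-predecessor. -/
  recv_matched : ∀ f, (M.lbl f).isRecv → ∃! e, M.msg e f
  /-- Every event has at most one `◁`-successor. -/
  msg_functional : ∀ e f f', M.msg e f → M.msg e f' → f = f'
  /-- The happens-before relation `(→ ∪ ◁)*` is a partial order, i.e. the
  relation `→ ∪ ◁` is acyclic. -/
  hb_po : ∀ e, ¬ Relation.TransGen M.step e e

/-- `lin` is a linearization of `M`: a reflexive total order containing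
happens-before. -/
structure IsLin (M : PreMSC P Msg) (lin : M.E → M.E → Prop) : Prop where
  refl : ∀ e, lin e e
  trans : ∀ e f g, lin e f → lin f g → lin e g
  antisymm : ∀ e f, lin e f → lin f e → e = f
  total : ∀ e f, lin e f ∨ lin f e
  hb_le : ∀ e f, M.hb e f → lin e f

/-- `lin` satisfies the mailbox (n-1) condition: any two sends to the same
destination in `lin`-order are either both matched with receives in the same
order, or the later one is unmatched. -/
def MailboxCond (M : PreMSC P Msg) (lin : M.E → M.E → Prop) : Prop :=
  ∀ s s' q, (M.lbl s).sendTo q → (M.lbl s').sendTo q → lin s s' →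
    (∃ r r', M.msg s r ∧ M.msg s' r' ∧ lin r r') ∨ ¬ M.Matched s'

/-- `lin` satisfies the 1-n condition: any two sends executed by the same
process, in process order, are either both matched with receives in the same
`lin`-order, or the later one is unmatched. -/
def OneNCond (M : PreMSC P Msg) (lin : M.E → M.E → Prop) : Prop :=
  ∀ s s', (M.lbl s).isSend → (M.lbl s').isSend →
    (M.lbl s).exec = (M.lbl s').exec → Relation.TransGen M.next s s' →
    (∃ r r', M.msg s r ∧ M.msg s' r' ∧ lin r r') ∨ ¬ M.Matched s'

/-- `lin` satisfies the n-n condition: any two sends in `lin`-order are either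
both matched with receives in the same `lin`-order, or the later one is
unmatched. -/
def NNCond (M : PreMSC P Msg) (lin : M.E → M.E → Prop) : Prop :=
  ∀ s s', (M.lbl s).isSend → (M.lbl s').isSend → lin s s' →
    (∃ r r', M.msg s r ∧ M.msg s' r' ∧ lin r r') ∨ ¬ M.Matched s'

/-- An n-1 (mailbox) MSC: one having a mailbox linearization. -/
def IsMailbox (M : PreMSC P Msg) : Prop := ∃ lin, M.IsLin lin ∧ M.MailboxCond lin

/-- A 1-n MSC: one having a 1-n linearization. -/
def IsOneN (M : PreMSC P Msg) : Prop := ∃ lin, M.IsLin lin ∧ M.OneNCond lin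

/-- An n-n MSC: one having an n-n linearization. -/
def IsNN (M : PreMSC P Msg) : Prop := ∃ lin, M.IsLin lin ∧ M.NNCond lin

/-- A peer-to-peer (1-1) MSC. -/
def IsPP (M : PreMSC P Msg) : Prop :=
  ∀ s s' p q, (M.lbl s).isSendFromTo p q → (M.lbl s').isSendFromTo p q →
    Relation.TransGen M.next s s' →
    (∃ r r', M.msg s r ∧ M.msg s' r' ∧ Relation.TransGen M.next r r') ∨ ¬ M.Matched s'

/-- A causally ordered MSC. -/
def IsCO (M : PreMSC P Msg) : Prop :=
  ∀ s s' q, (M.lbl s).sendTo q → (M.lbl s').sendTo q → M.hb s s' →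
    (∃ r r', M.msg s r ∧ M.msg s' r' ∧ Relation.ReflTransGen M.next r r') ∨ ¬ M.Matched s'

/-- An RSC MSC: no unmatched send events and some linearization in which every
send is immediately followed by its matching receive. -/
def IsRSC (M : PreMSC P Msg) : Prop :=
  (∀ e, (M.lbl e).isSend → M.Matched e) ∧
  ∃ lin, M.IsLin lin ∧
    ∀ s r, M.msg s r → lin s r ∧ ∀ e, lin s e → lin e r → e = s ∨ e = r

/-- The relation `↦_mb`. -/
def mbRel (M : PreMSC P Msg) (s s' : M.E) : Prop :=
  (∃ q, (M.lbl s).sendTo q ∧ (M.lbl s').sendTo q) ∧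
  ((M.Matched s ∧ ¬ M.Matched s') ∨
    ∃ r₁ r₂, M.msg s r₁ ∧ M.msg s' r₂ ∧ Relation.TransGen M.next r₁ r₂)

/-- The relation `↦_1n`. -/
def onenRel (M : PreMSC P Msg) (e₁ e₂ : M.E) : Prop :=
  ((M.lbl e₁).isSend ∧ (M.lbl e₂).isSend ∧ (M.lbl e₁).exec = (M.lbl e₂).exec ∧
    M.Matched e₁ ∧ ¬ M.Matched e₂) ∨
  (∃ s₁ s₂, M.msg s₁ e₁ ∧ M.msg s₂ e₂ ∧ (M.lbl s₁).exec = (M.lbl s₂).exec ∧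
    Relation.TransGen M.next s₁ s₂)

/-- One step of `≺_mb`: the relation `→ ∪ ◁ ∪ ↦_mb`. -/
def mbStep (M : PreMSC P Msg) (a b : M.E) : Prop := M.next a b ∨ M.msg a b ∨ M.mbRel a b

/-- One step of `⪯_1n`: the relation `→ ∪ ◁ ∪ ↦_1n`. -/
def onenStep (M : PreMSC P Msg) (a b : M.E) : Prop := M.next a b ∨ M.msg a b ∨ M.onenRel a b

/-- One step of `◅`: the relation `→ ∪ ◁ ∪ ↦_mb ∪ ↦_1n`. -/
def nnStep (M : PreMSC P Msg) (a b : M.E) : Prop :=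
  M.next a b ∨ M.msg a b ∨ M.mbRel a b ∨ M.onenRel a b

/-- The relation `◅ := (→ ∪ ◁ ∪ ↦_mb ∪ ↦_1n)⁺`. -/
def nnRel (M : PreMSC P Msg) : M.E → M.E → Prop := Relation.TransGen M.nnStep

/-- The relation `⋈`. -/
def nnBowtie (M : PreMSC P Msg) (e₁ e₂ : M.E) : Prop :=
  M.nnRel e₁ e₂ ∨
  ((∃ s₁ s₂, M.msg s₁ e₁ ∧ M.msg s₂ e₂ ∧ M.nnRel s₁ s₂) ∧ ¬ M.nnRel e₁ e₂) ∨
  ((∃ r₁ r₂, M.msg e₁ r₁ ∧ M.msg e₂ r₂ ∧ M.nnRel r₁ r₂) ∧ ¬ M.nnRel e₁ e₂) ∨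
  ((M.lbl e₁).isSend ∧ M.Matched e₁ ∧ (M.lbl e₂).isSend ∧ ¬ M.Matched e₂ ∧
    ¬ M.nnRel e₁ e₂)

/-- `lin` is `k`-bounded: for every send event `e` from `p` to `q`, the number
of sends from `p` to `q` up to `e` minus the number of receives of messages
from `p` to `q` up to `e` is at most `k`. -/
def KBounded (M : PreMSC P Msg) (k : ℕ) (lin : M.E → M.E → Prop) : Prop :=
  ∀ e p q m, M.lbl e = .send p q m →
    Set.ncard {f | lin f e ∧ (M.lbl f).isSendFromTo p q} ≤
      Set.ncard {f | lin f e ∧ (M.lbl f).isRecvFromTo p q} + k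

/-- The relation `R_k` (`⇝_k` of Lohrey–Muscholl, asynchronous version):
`r R_k s` iff there is a chain `s₁ →⁺ … →⁺ s_k →⁺ s` of sends from `p` to `q`,
at least one of them matched, `r` is a receive matching one of them, and `r`
is `→*`-before every receive matching one of them. -/
def RkRel (M : PreMSC P Msg) (k : ℕ) (r s : M.E) : Prop :=
  ∃ (p q : P) (σ : Fin (k + 1) → M.E),
    σ (Fin.last k) = s ∧
    (∀ i : Fin k, Relation.TransGen M.next (σ i.castSucc) (σ i.succ)) ∧
    (∀ i, (M.lbl (σ i)).isSendFromTo p q) ∧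
    (∃ i, M.Matched (σ i)) ∧
    (∃ i, M.msg (σ i) r) ∧
    (∀ i f, M.msg (σ i) f → Relation.ReflTransGen M.next r f)

/-- `e` is the `n`-th (1-indexed) send event of channel `(p,q)`. -/
def nthSend (M : PreMSC P Msg) (p q : P) (n : ℕ) (e : M.E) : Prop :=
  (M.lbl e).isSendFromTo p q ∧
  Set.ncard {f | (M.lbl f).isSendFromTo p q ∧ Relation.ReflTransGen M.next f e} = n

/-- `e` is the `n`-th (1-indexed) receive event of channel `(p,q)`. -/
def nthRecv (M : PreMSC P Msg) (p q : P) (n : ℕ) (e : M.E) : Prop :=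
  (M.lbl e).isRecvFromTo p q ∧
  Set.ncard {f | (M.lbl f).isRecvFromTo p q ∧ Relation.ReflTransGen M.next f e} = n

/-- The relation `≺_B` for bound `k`: `r ≺_B s` iff for some `i ≥ 1` and some
channel `(p,q)`, `r` is the `i`-th receive and `s` the `(i+k)`-th send of `(p,q)`. -/
def BRel (M : PreMSC P Msg) (k : ℕ) (r s : M.E) : Prop :=
  ∃ (p q : P) (i : ℕ), 1 ≤ i ∧ M.nthRecv p q i r ∧ M.nthSend p q (i + k) s

/-- For every channel `(p,q)` there are at most `k` unmatched sends from `p` to `q`. -/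
def UnmatchedBounded (M : PreMSC P Msg) (k : ℕ) : Prop :=
  ∀ p q : P, Set.ncard {e | (M.lbl e).isSendFromTo p q ∧ ¬ M.Matched e} ≤ k

/-- The restriction of an MSC to a subset of its events. -/
def restrict (M : PreMSC P Msg) (S : Set M.E) : PreMSC P Msg where
  E := S
  next := fun a b => M.next a.val b.val
  msg := fun a b => M.msg a.val b.val
  lbl := fun a => M.lbl a.val

/-- `S` is downward-closed for happens-before. -/
def DownClosed (M : PreMSC P Msg) (S : Set M.E) : Prop :=
  ∀ e f, M.hb e f → f ∈ S → e ∈ S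

/-- `S` is downward-closed for `⪯_1n := (→ ∪ ◁ ∪ ↦_1n)*`. -/
def OneNDownClosed (M : PreMSC P Msg) (S : Set M.E) : Prop :=
  ∀ e f, Relation.ReflTransGen M.onenStep e f → f ∈ S → e ∈ S

/-- The MSC contains a crown: a cyclic sequence of matched message pairs
`(s_i, r_i)`, of length at least 2, with `s_i < r_{i+1}` (indices mod `k`). -/
def HasCrown (M : PreMSC P Msg) : Prop :=
  ∃ (k : ℕ) (hk : 2 ≤ k) (s r : Fin k → M.E),
    (∀ i, M.msg (s i) (r i)) ∧
    ∀ i : Fin k, M.shb (s i) (r ⟨(i.val + 1) % k, Nat.mod_lt _ (by omega)⟩)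

end PreMSC

end MSCPaper

/-!
Fix a 1-n linearization `⊑`. The history of an event is the event itself together with the
receives of the matched sends at or before it on its process line. By the 1-n condition, the
`⊑`-latest element of the history of a matched send is its receive. Hence the position of the
latest element of the history does not decrease along `→` and `◁`, and sorting events by it (ties
broken by `⊑`) yields a linearization in which matched sends to a common destination are ordered
like their receives, all of which lie on the destination's process line. An unmatched send and
everything after it on its process line are moved to the end: by the 1-n condition no matched send
is among them, and no message leaves them.
-/

namespace MSCPaper

noncomputable def rank {α : Type*} (lin : α → α → Prop) (e : α) : ℕ := {f | lin f e}.ncard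

namespace PreMSC

variable {P Msg : Type} {M : PreMSC P Msg} {lin : M.E → M.E → Prop}

lemma hb_of_transGen_next {a b : M.E} (h : Relation.TransGen M.next a b) : M.hb a b :=
  (Relation.TransGen.mono (fun _ _ => Or.inl) _ _ h).to_reflTransGen

lemma IsMSC.exec_eq_of_transGen_next (hM : M.IsMSC) {a b : M.E}
    (h : Relation.TransGen M.next a b) : (M.lbl a).exec = (M.lbl b).exec := by
  induction h with
  | single h => exact hM.next_exec _ _ h
  | tail _ h ih => exact ih.trans (hM.next_exec _ _ h)

lemma IsMSC.isSend_of_msg (hM : M.IsMSC) {s r : M.E} (h : M.msg s r) : (M.lbl s).isSend := by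
  obtain ⟨p, q, m, hs, -⟩ := hM.msg_lbl _ _ h
  exact ⟨p, q, m, hs⟩

lemma IsMSC.exec_eq_of_msg (hM : M.IsMSC) {s r : M.E} {q : P} (hs : (M.lbl s).sendTo q)
    (h : M.msg s r) : (M.lbl r).exec = q := by
  obtain ⟨p, m, hs⟩ := hs
  obtain ⟨p', q', m', hs', hr⟩ := hM.msg_lbl _ _ h
  rw [hs] at hs'
  cases hs'
  rw [hr]
  rfl

lemma IsLin.of_exec_eq (hM : M.IsMSC) (hlin : M.IsLin lin) {lin' : M.E → M.E → Prop}
    (hlin' : M.IsLin lin') {a b : M.E} (hexec : (M.lbl a).exec = (M.lbl b).exec)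
    (h : lin a b) : lin' a b := by
  by_cases hab : a = b
  · exact hab ▸ hlin'.refl a
  rcases hM.proc_total a b hexec hab with hnext | hnext
  · exact hlin'.hb_le _ _ (hb_of_transGen_next hnext)
  · exact absurd (hlin.antisymm _ _ h (hlin.hb_le _ _ (hb_of_transGen_next hnext))) hab

lemma IsLin.le_iff_rank_le [Finite M.E] (hlin : M.IsLin lin) {a b : M.E} :
    lin a b ↔ rank lin a ≤ rank lin b := by
  refine ⟨fun h => Set.ncard_le_ncard fun f hf => hlin.trans _ _ _ hf h, fun h => ?_⟩
  by_contra hab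
  have hlt : {f | lin f b} ⊂ {f | lin f a} :=
    ⟨fun f hf => hlin.trans _ _ _ hf ((hlin.total a b).resolve_left hab),
      fun hsub => hab (hsub (hlin.refl a))⟩
  exact (Set.ncard_lt_ncard hlt).not_ge h

lemma IsLin.rank_injective [Finite M.E] (hlin : M.IsLin lin) : Function.Injective (rank lin) :=
  fun _ _ h => hlin.antisymm _ _ (hlin.le_iff_rank_le.2 h.le) (hlin.le_iff_rank_le.2 h.ge)

lemma isLin_of_injective {α : Type*} [LinearOrder α] (φ : M.E → α)
    (hφ : Function.Injective φ) (hstep : ∀ a b, M.step a b → φ a ≤ φ b) :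
    M.IsLin fun a b => φ a ≤ φ b where
  refl _ := le_rfl
  trans _ _ _ := le_trans
  antisymm _ _ hab hba := hφ (le_antisymm hab hba)
  total a b := le_total (φ a) (φ b)
  hb_le _ _ h := by
    induction h with
    | refl => exact le_rfl
    | tail _ hst ih => exact ih.trans (hstep _ _ hst)

def Tainted (M : PreMSC P Msg) (e : M.E) : Prop :=
  ∃ u, (M.lbl u).isSend ∧ ¬ M.Matched u ∧ Relation.ReflTransGen M.next u e

lemma OneNCond.not_matched_of_tainted (hM : M.IsMSC) (h1n : M.OneNCond lin) {e : M.E}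
    (ht : M.Tainted e) (hs : (M.lbl e).isSend) : ¬ M.Matched e := by
  obtain ⟨u, hu, hun, hue⟩ := ht
  rcases Relation.reflTransGen_iff_eq_or_transGen.1 hue with rfl | hue
  · exact hun
  · rcases h1n u e hu hs (hM.exec_eq_of_transGen_next hue) hue with ⟨r, -, hr, -⟩ | he
    · exact absurd ⟨r, hr⟩ hun
    · exact he

lemma OneNCond.tainted_of_step (hM : M.IsMSC) (h1n : M.OneNCond lin) {a b : M.E}
    (h : M.step a b) (ha : M.Tainted a) : M.Tainted b := by
  rcases h with h | h
  · obtain ⟨u, hu, hun, hua⟩ := ha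
    exact ⟨u, hu, hun, hua.tail h⟩
  · exact absurd ⟨b, h⟩ (h1n.not_matched_of_tainted hM ha (hM.isSend_of_msg h))

def History (M : PreMSC P Msg) (e : M.E) : Set M.E :=
  {x | x = e ∨ ∃ t, M.msg t x ∧ Relation.ReflTransGen M.next t e}

noncomputable def historyRank (M : PreMSC P Msg) (lin : M.E → M.E → Prop) (e : M.E) : ℕ :=
  {f | ∃ x ∈ M.History e, lin f x}.ncard

lemma historyRank_le_historyRank [Finite M.E] (hlin : M.IsLin lin) {a b : M.E}
    (h : ∀ x ∈ M.History a, ∃ y ∈ M.History b, lin x y) :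
    M.historyRank lin a ≤ M.historyRank lin b := by
  refine Set.ncard_le_ncard fun f ⟨x, hx, hfx⟩ => ?_
  obtain ⟨y, hy, hxy⟩ := h x hx
  exact ⟨y, hy, hlin.trans _ _ _ hfx hxy⟩

lemma rank_le_historyRank [Finite M.E] (e : M.E) : rank lin e ≤ M.historyRank lin e :=
  Set.ncard_le_ncard fun _ hf => ⟨e, Or.inl rfl, hf⟩

lemma OneNCond.le_of_mem_history (hM : M.IsMSC) (hlin : M.IsLin lin) (h1n : M.OneNCond lin)
    {s r x : M.E} (h : M.msg s r) (hx : x ∈ M.History s) : lin x r := by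
  rcases hx with rfl | ⟨t, htx, hts⟩
  · exact hlin.hb_le _ _ (.single (Or.inr h))
  rcases Relation.reflTransGen_iff_eq_or_transGen.1 hts with rfl | hts
  · exact hM.msg_functional _ _ _ htx h ▸ hlin.refl x
  rcases h1n t s (hM.isSend_of_msg htx) (hM.isSend_of_msg h)
    (hM.exec_eq_of_transGen_next hts) hts with ⟨x', r', hx', hr', hxr'⟩ | hs
  · rwa [hM.msg_functional _ _ _ htx hx', hM.msg_functional _ _ _ h hr']
  · exact absurd ⟨r, h⟩ hs

lemma OneNCond.historyRank_eq_rank (hM : M.IsMSC) (hlin : M.IsLin lin) (h1n : M.OneNCond lin)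
    {s r : M.E} (h : M.msg s r) : M.historyRank lin s = rank lin r := by
  refine congrArg Set.ncard (Set.ext fun f => ⟨fun ⟨x, hx, hfx⟩ => ?_, fun hf => ?_⟩)
  · exact hlin.trans _ _ _ hfx (h1n.le_of_mem_history hM hlin h hx)
  · exact ⟨r, Or.inr ⟨s, h, .refl⟩, hf⟩

lemma OneNCond.historyRank_le_of_step (hM : M.IsMSC) (hlin : M.IsLin lin)
    (h1n : M.OneNCond lin) {a b : M.E} (h : M.step a b) :
    M.historyRank lin a ≤ M.historyRank lin b := by
  have := hM.finite
  rcases h with h | h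
  · refine historyRank_le_historyRank hlin fun x hx => ?_
    rcases hx with rfl | ⟨t, htx, hta⟩
    · exact ⟨b, Or.inl rfl, hlin.hb_le _ _ (.single (Or.inl h))⟩
    · exact ⟨x, Or.inr ⟨t, htx, hta.tail h⟩, hlin.refl x⟩
  · exact (h1n.historyRank_eq_rank hM hlin h).trans_le (rank_le_historyRank b)

noncomputable def mailboxKey (M : PreMSC P Msg) (lin : M.E → M.E → Prop) (e : M.E) :
    Prop ×ₗ (ℕ ×ₗ ℕ) :=
  toLex (M.Tainted e, toLex (M.historyRank lin e, rank lin e))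

lemma OneNCond.isLin_mailboxKey (hM : M.IsMSC) (hlin : M.IsLin lin) (h1n : M.OneNCond lin) :
    M.IsLin fun a b => M.mailboxKey lin a ≤ M.mailboxKey lin b := by
  have := hM.finite
  refine isLin_of_injective _ (fun _ _ hab => hlin.rank_injective ?_) fun _ _ h => ?_
  · exact congrArg (fun k => (ofLex (ofLex k).2).2) hab
  · refine Prod.Lex.toLex_mono ⟨h1n.tainted_of_step hM h, Prod.Lex.toLex_mono ⟨?_, ?_⟩⟩
    · exact h1n.historyRank_le_of_step hM hlin h
    · exact hlin.le_iff_rank_le.1 (hlin.hb_le _ _ (.single h))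

lemma OneNCond.mailboxCond_mailboxKey (hM : M.IsMSC) (hlin : M.IsLin lin)
    (h1n : M.OneNCond lin) :
    M.MailboxCond fun a b => M.mailboxKey lin a ≤ M.mailboxKey lin b := by
  have := hM.finite
  intro s s' q hs hs' hle
  by_cases hm' : M.Matched s'
  swap
  · exact Or.inr hm'
  obtain ⟨r', hr'⟩ := hm'
  have isSend_of_sendTo : ∀ {e}, (M.lbl e).sendTo q → (M.lbl e).isSend :=
    fun ⟨p, m, he⟩ => ⟨p, q, m, he⟩
  have ht' : ¬ M.Tainted s' := fun ht =>
    h1n.not_matched_of_tainted hM ht (isSend_of_sendTo hs') ⟨r', hr'⟩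
  obtain ⟨hT, hkey⟩ := Prod.Lex.toLex_le_toLex'.1 hle
  have ht : ¬ M.Tainted s := fun ht => ht' (hT ht)
  obtain ⟨r, hr⟩ : M.Matched s := by
    by_contra hm
    exact ht ⟨s, isSend_of_sendTo hs, hm, .refl⟩
  have hrank : M.historyRank lin s ≤ M.historyRank lin s' :=
    Prod.Lex.monotone_fst _ _ (hkey (propext ⟨fun h => absurd h ht, fun h => absurd h ht'⟩))
  rw [h1n.historyRank_eq_rank hM hlin hr, h1n.historyRank_eq_rank hM hlin hr',
    ← hlin.le_iff_rank_le] at hrank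
  refine Or.inl ⟨r, r', hr, hr', hlin.of_exec_eq hM (h1n.isLin_mailboxKey hM hlin) ?_ hrank⟩
  rw [hM.exec_eq_of_msg hs hr, hM.exec_eq_of_msg hs' hr']

end PreMSC

/-- Every 1-n MSC is an n-1 (mailbox) MSC. -/
theorem isMailbox_of_isOneN {P Msg : Type} (M : PreMSC P Msg) (hM : M.IsMSC)
    (h : M.IsOneN) : M.IsMailbox := by
  obtain ⟨lin, hlin, h1n⟩ := h
  exact ⟨_, h1n.isLin_mailboxKey hM hlin, h1n.mailboxCond_mailboxKey hM hlin⟩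

end MSCPaper
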